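/- Under the conditions of the AIHT convergence theorem (with constants η > 0, b₁ = η/(1+η), b₂ = (C_ℓ-1)σ_M²b₁²/(C_ℓ(1-δ_{2ℓ-p})), assuming b₂/b₁² < 1 and 1+δ_{2ℓ-p} ≤ 1/μ < (1+√(1-b₂/b₁²))b₁(1-δ_{2ℓ-p}) and 1/μ ≤ σ_M²): if ‖y - Mx̂^{t-1}‖₂² ≤ η²‖e‖₂² then ‖y - Mx̂^t‖₂² ≤ η²‖e‖₂²; and if ‖y - Mx̂^{t-1}‖₂² > η²‖e‖₂² then ‖y - Mx̂^t‖₂² ≤ c₄‖y - Mx̂^{t-1}‖₂² where c₄ = (1+1/η)²(1/(μ(1-δ_{2ℓ-p})) - 1)C_ℓ + (C_ℓ-1)(μσ_M² - 1) + C_ℓ/η² < 1. -/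

import Mathlib

noncomputable section

abbrev Evec (d : ℕ) := EuclideanSpace ℝ (Fin d)

def nullSp {d p : ℕ} (Om : Evec d →L[ℝ] Evec p) (Λ : Finset (Fin p)) : Submodule ℝ (Evec d) where
  carrier := {x | ∀ i ∈ Λ, Om x i = 0}
  zero_mem' := by intro i _; simp
  add_mem' := by intro a b ha hb i hi; simp [ha i hi, hb i hi]
  smul_mem' := by intro c a ha i hi; simp [ha i hi]

def Qp {d p : ℕ} (Om : Evec d →L[ℝ] Evec p) (Λ : Finset (Fin p)) : Evec d →L[ℝ] Evec d :=
  (nullSp Om Λ).subtypeL ∘L (nullSp Om Λ).orthogonalProjection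

def Cosparse {d p : ℕ} (Om : Evec d →L[ℝ] Evec p) (ℓ : ℕ) (v : Evec d) : Prop :=
  ℓ ≤ {i : Fin p | Om v i = 0}.ncard

def ORIP {d m p : ℕ} (M : Evec d →L[ℝ] Evec m) (Om : Evec d →L[ℝ] Evec p) (ℓ : ℕ) (δ : ℝ) : Prop :=
  ∀ v : Evec d, Cosparse Om ℓ v →
    (1 - δ) * ‖v‖ ^ 2 ≤ ‖M v‖ ^ 2 ∧ ‖M v‖ ^ 2 ≤ (1 + δ) * ‖v‖ ^ 2

open RealInnerProductSpace

/-!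
One step is a gradient step `x̂ᵍ = x̂^{t-1} + μ M*(y - M x̂^{t-1})` followed by a near-optimal
projection. The difference of two `ℓ`-cosparse vectors is `(2ℓ - p)`-cosparse, so the Ω-RIP
bounds `‖M(x̂^t - x̂^{t-1})‖²` by `‖x̂^t - x̂^{t-1}‖² / μ` and `‖x - x̂^{t-1}‖²` by
`‖M(x - x̂^{t-1})‖² / (1 - δ)`; expanding the squares gives the single-iteration bound.
Since `M(x - x̂^{t-1}) = r - e` with `r = y - M x̂^{t-1}`, its right-hand side is a quadratic form
in `(‖r‖, ‖e‖)` with nonnegative coefficients, hence at most `c₄ · max(‖r‖, η‖e‖)²`.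
Finally, `c₄ - 1` has the sign of `t² - 2b₁(1-δ)t + b₂(1-δ)²` at `t = 1/μ`, a quadratic with roots
`(1 ± √(1 - b₂/b₁²)) b₁ (1 - δ)`, and the step-size conditions put `1/μ` between them.
-/

lemma Cosparse.sub {d p ℓ : ℕ} {Om : Evec d →L[ℝ] Evec p} {u v : Evec d}
    (hu : Cosparse Om ℓ u) (hv : Cosparse Om ℓ v) : Cosparse Om (2 * ℓ - p) (u - v) := by
  set A := {i : Fin p | Om u i = 0}
  set B := {i : Fin p | Om v i = 0}
  have hAB : A ∩ B ⊆ {i : Fin p | Om (u - v) i = 0} := by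
    rintro i ⟨hiA, hiB⟩
    simp_all [A, B]
  have hunion : (A ∪ B).ncard ≤ p := by
    simpa [Set.ncard_univ] using Set.ncard_le_ncard (Set.subset_univ (A ∪ B))
  have hinter : 2 * ℓ - p ≤ (A ∩ B).ncard := by
    have := Set.ncard_inter_add_ncard_union A B
    have hA : ℓ ≤ A.ncard := hu
    have hB : ℓ ≤ B.ncard := hv
    omega
  exact hinter.trans (Set.ncard_le_ncard hAB)

lemma cosparse_Qp {d p ℓ : ℕ} (Om : Evec d →L[ℝ] Evec p) {Λ : Finset (Fin p)}
    (hΛ : ℓ ≤ Λ.card) (z : Evec d) : Cosparse Om ℓ (Qp Om Λ z) := by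
  have hΛz : (Λ : Set (Fin p)) ⊆ {i | Om (Qp Om Λ z) i = 0} :=
    fun i hi ↦ ((nullSp Om Λ).orthogonalProjectionOnto z).2 i hi
  calc ℓ ≤ (Λ : Set (Fin p)).ncard := by rwa [Set.ncard_coe_finset]
    _ ≤ _ := Set.ncard_le_ncard hΛz

section GradientStep

variable {E F : Type*} [NormedAddCommGroup E] [InnerProductSpace ℝ E] [CompleteSpace E]
  [NormedAddCommGroup F] [InnerProductSpace ℝ F] [CompleteSpace F] (M : E →L[ℝ] F)

lemma inner_smul_adjoint_apply (μ : ℝ) (r : F) (h : E) :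
    ⟪h, μ • M.adjoint r⟫ = μ * ⟪r, M h⟫ := by
  rw [real_inner_smul_right, ContinuousLinearMap.adjoint_inner_right, real_inner_comm]

lemma norm_smul_adjoint_apply_sq_le (μ : ℝ) (r : F) :
    ‖μ • M.adjoint r‖ ^ 2 ≤ μ ^ 2 * ‖M‖ ^ 2 * ‖r‖ ^ 2 := by
  have h : ‖M.adjoint r‖ ≤ ‖M‖ * ‖r‖ := by
    simpa only [LinearIsometryEquiv.norm_map] using M.adjoint.le_opNorm r
  calc ‖μ • M.adjoint r‖ ^ 2 = μ ^ 2 * ‖M.adjoint r‖ ^ 2 := by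
        rw [norm_smul, mul_pow, Real.norm_eq_abs, sq_abs]
    _ ≤ μ ^ 2 * (‖M‖ * ‖r‖) ^ 2 := by gcongr
    _ = μ ^ 2 * ‖M‖ ^ 2 * ‖r‖ ^ 2 := by ring

lemma residual_sq_le_of_gradient_step {μ : ℝ} (r : F) (h : E) (hμ : 0 < μ)
    (hh : ‖M h‖ ^ 2 ≤ 1 / μ * ‖h‖ ^ 2) :
    ‖r - M h‖ ^ 2 ≤
      ‖r‖ ^ 2 + 1 / μ * (‖h - μ • M.adjoint r‖ ^ 2 - ‖μ • M.adjoint r‖ ^ 2) := by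
  have hexpand : 1 / μ * (‖h - μ • M.adjoint r‖ ^ 2 - ‖μ • M.adjoint r‖ ^ 2) =
      1 / μ * ‖h‖ ^ 2 - 2 * ⟪r, M h⟫ := by
    rw [norm_sub_sq_real, inner_smul_adjoint_apply]
    field_simp
    ring
  rw [norm_sub_sq_real, hexpand]
  linarith

lemma residual_sq_sub_le_of_near_projection {μ C δ : ℝ} (r : F) (h k : E) (hμ : 0 < μ)
    (hC : 1 ≤ C) (hδ : δ < 1) (hh : ‖M h‖ ^ 2 ≤ 1 / μ * ‖h‖ ^ 2)
    (hk : (1 - δ) * ‖k‖ ^ 2 ≤ ‖M k‖ ^ 2)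
    (hnear : ‖h - μ • M.adjoint r‖ ^ 2 ≤ C * ‖k - μ • M.adjoint r‖ ^ 2) :
    ‖r - M h‖ ^ 2 - ‖r‖ ^ 2 ≤ C * (‖r - M k‖ ^ 2 - ‖r‖ ^ 2)
      + C * (1 / (μ * (1 - δ)) - 1) * ‖M k‖ ^ 2 + (C - 1) * μ * ‖M‖ ^ 2 * ‖r‖ ^ 2 := by
  set g := μ • M.adjoint r
  have hδ' : 0 < 1 - δ := by linarith
  have hk' : C * ‖k‖ ^ 2 ≤ C / (1 - δ) * ‖M k‖ ^ 2 := by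
    rw [div_mul_eq_mul_div, le_div_iff₀ hδ']
    nlinarith
  have hg := norm_smul_adjoint_apply_sq_le M μ r
  have hC' : 0 ≤ C - 1 := by linarith
  suffices ‖r - M h‖ ^ 2 ≤ ‖r‖ ^ 2 + C * (‖r - M k‖ ^ 2 - ‖r‖ ^ 2)
      + C * (1 / (μ * (1 - δ)) - 1) * ‖M k‖ ^ 2 + (C - 1) * μ * ‖M‖ ^ 2 * ‖r‖ ^ 2 by linarith
  calc ‖r - M h‖ ^ 2 ≤ ‖r‖ ^ 2 + 1 / μ * (‖h - g‖ ^ 2 - ‖g‖ ^ 2) :=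
        residual_sq_le_of_gradient_step M r h hμ hh
    _ ≤ ‖r‖ ^ 2 + 1 / μ * (C * ‖k - g‖ ^ 2 - ‖g‖ ^ 2) := by gcongr
    _ = ‖r‖ ^ 2 + 1 / μ * (C * ‖k‖ ^ 2 + (C - 1) * ‖g‖ ^ 2) - 2 * C * ⟪r, M k⟫ := by
        rw [norm_sub_sq_real k, inner_smul_adjoint_apply]
        field_simp
        ring
    _ ≤ ‖r‖ ^ 2 + 1 / μ * (C / (1 - δ) * ‖M k‖ ^ 2 + (C - 1) * (μ ^ 2 * ‖M‖ ^ 2 * ‖r‖ ^ 2))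
        - 2 * C * ⟪r, M k⟫ := by gcongr
    _ = _ := by
        rw [norm_sub_sq_real r]
        field_simp
        ring

end GradientStep

lemma aiht_residual_sq_sub_le {d m p ℓ : ℕ} (M : Evec d →L[ℝ] Evec m)
    (Om : Evec d →L[ℝ] Evec p) (x xprev xg xt : Evec d) (y : Evec m)
    (S : Evec d → Finset (Fin p)) (C δ μ : ℝ) (hx : Cosparse Om ℓ x)
    (hxprev : Cosparse Om ℓ xprev) (hScard : ∀ z : Evec d, ℓ ≤ (S z).card)
    (hSnear : ∀ z v : Evec d, Cosparse Om ℓ v → ‖z - Qp Om (S z) z‖ ^ 2 ≤ C * ‖z - v‖ ^ 2)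
    (hC : 1 ≤ C) (hrip : ORIP M Om (2 * ℓ - p) δ) (hδ1 : δ < 1) (hμ : 0 < μ)
    (hμ1 : 1 + δ ≤ 1 / μ) (hxg : xg = xprev + μ • M.adjoint (y - M xprev))
    (hxt : xt = Qp Om (S xg) xg) :
    ‖y - M xt‖ ^ 2 - ‖y - M xprev‖ ^ 2 ≤ C * (‖y - M x‖ ^ 2 - ‖y - M xprev‖ ^ 2)
      + C * (1 / (μ * (1 - δ)) - 1) * ‖M (x - xprev)‖ ^ 2
      + (C - 1) * μ * ‖M‖ ^ 2 * ‖y - M xprev‖ ^ 2 := by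
  have hxt_cosparse : Cosparse Om ℓ xt := hxt ▸ cosparse_Qp Om (hScard xg) xg
  have hh : ‖M (xt - xprev)‖ ^ 2 ≤ 1 / μ * ‖xt - xprev‖ ^ 2 :=
    (hrip _ (hxt_cosparse.sub hxprev)).2.trans (by gcongr)
  have hnear : ‖xt - xprev - μ • M.adjoint (y - M xprev)‖ ^ 2
      ≤ C * ‖x - xprev - μ • M.adjoint (y - M xprev)‖ ^ 2 := by
    rw [sub_sub, sub_sub, ← hxg, norm_sub_rev xt, norm_sub_rev x, hxt]
    exact hSnear xg x hx
  simpa only [map_sub, sub_sub_sub_cancel_right] using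
    residual_sq_sub_le_of_near_projection M (y - M xprev) (xt - xprev) (x - xprev) hμ hC hδ1
      hh (hrip _ (hx.sub hxprev)).1 hnear

lemma mul_sq_add_mul_sq_add_mul_add_sq_le {K D A η R E T : ℝ} (hK : 0 ≤ K) (hD : 0 ≤ D)
    (hA : 0 ≤ A) (hη : 0 < η) (hR : 0 ≤ R) (hE : 0 ≤ E) (hRT : R ≤ T) (hET : η * E ≤ T) :
    K * R ^ 2 + D * E ^ 2 + A * (R + E) ^ 2 ≤ (K + D / η ^ 2 + A * (1 + 1 / η) ^ 2) * T ^ 2 := by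
  have hET' : E ≤ T / η := by rwa [le_div_iff₀ hη, mul_comm]
  calc K * R ^ 2 + D * E ^ 2 + A * (R + E) ^ 2
      ≤ K * T ^ 2 + D * (T / η) ^ 2 + A * (T + T / η) ^ 2 := by gcongr
    _ = _ := by ring

lemma aiht_rate_lt_one {C δ μ η b₁ b₂ σ : ℝ} (hC : 0 < C) (hδ0 : 0 ≤ δ) (hδ1 : δ < 1)
    (hη : 0 < η) (hb₁ : b₁ = η / (1 + η)) (hb₂ : b₂ = (C - 1) * σ ^ 2 * b₁ ^ 2 / (C * (1 - δ)))
    (hcond : b₂ / b₁ ^ 2 < 1) (hμ : 0 < μ) (hμ1 : 1 + δ ≤ 1 / μ)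
    (hμ2 : 1 / μ < (1 + Real.sqrt (1 - b₂ / b₁ ^ 2)) * b₁ * (1 - δ)) :
    (1 + 1 / η) ^ 2 * (1 / (μ * (1 - δ)) - 1) * C + (C - 1) * (μ * σ ^ 2 - 1) + C / η ^ 2 < 1 := by
  have hδ' : 0 < 1 - δ := by linarith
  have hb₁0 : 0 < b₁ := by rw [hb₁]; positivity
  have hb₁1 : b₁ < 1 := by rw [hb₁, div_lt_one (by linarith)]; linarith
  set s := Real.sqrt (1 - b₂ / b₁ ^ 2)
  have hs : ((1 - δ) * b₁ * s) ^ 2 = (1 - δ) ^ 2 * (b₁ ^ 2 - b₂) := by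
    rw [mul_pow, Real.sq_sqrt (by linarith)]
    field_simp
  have hgap : 0 < 1 / μ - (1 - δ) * b₁ := by nlinarith
  have hq : (1 / μ - (1 - δ) * b₁) ^ 2 < (1 - δ) ^ 2 * (b₁ ^ 2 - b₂) := by
    rw [← hs]
    exact pow_lt_pow_left₀ (by linarith) hgap.le two_ne_zero
  have hid : (1 + 1 / η) ^ 2 * (1 / (μ * (1 - δ)) - 1) * C + (C - 1) * (μ * σ ^ 2 - 1)
      + C / η ^ 2 - 1 = C * μ / (b₁ ^ 2 * (1 - δ))
        * ((1 / μ - (1 - δ) * b₁) ^ 2 - (1 - δ) ^ 2 * (b₁ ^ 2 - b₂)) := by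
    subst hb₂ hb₁
    field_simp
    ring
  have : C * μ / (b₁ ^ 2 * (1 - δ)) * ((1 / μ - (1 - δ) * b₁) ^ 2
      - (1 - δ) ^ 2 * (b₁ ^ 2 - b₂)) < 0 :=
    mul_neg_of_pos_of_neg (by positivity) (by linarith)
  linarith

lemma aiht_residual_sq_le_rate_mul_sq {d m p ℓ : ℕ} (M : Evec d →L[ℝ] Evec m)
    (Om : Evec d →L[ℝ] Evec p) (x xprev xg xt : Evec d) (y : Evec m)
    (S : Evec d → Finset (Fin p)) (C δ μ η : ℝ) (hx : Cosparse Om ℓ x)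
    (hxprev : Cosparse Om ℓ xprev) (hScard : ∀ z : Evec d, ℓ ≤ (S z).card)
    (hSnear : ∀ z v : Evec d, Cosparse Om ℓ v → ‖z - Qp Om (S z) z‖ ^ 2 ≤ C * ‖z - v‖ ^ 2)
    (hC : 1 ≤ C) (hrip : ORIP M Om (2 * ℓ - p) δ) (hδ0 : 0 ≤ δ) (hδ1 : δ < 1) (hη : 0 < η)
    (hμ : 0 < μ) (hμ1 : 1 + δ ≤ 1 / μ) (hμ3 : 1 / μ ≤ ‖M‖ ^ 2)
    (hxg : xg = xprev + μ • M.adjoint (y - M xprev)) (hxt : xt = Qp Om (S xg) xg) (T : ℝ)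
    (hrT : ‖y - M xprev‖ ≤ T) (heT : η * ‖y - M x‖ ≤ T) :
    ‖y - M xt‖ ^ 2 ≤ ((1 + 1 / η) ^ 2 * (1 / (μ * (1 - δ)) - 1) * C
      + (C - 1) * (μ * ‖M‖ ^ 2 - 1) + C / η ^ 2) * T ^ 2 := by
  have hstep := aiht_residual_sq_sub_le M Om x xprev xg xt y S C δ μ hx hxprev hScard hSnear hC
    hrip hδ1 hμ hμ1 hxg hxt
  have hMk : ‖M (x - xprev)‖ ≤ ‖y - M xprev‖ + ‖y - M x‖ := by
    rw [map_sub, ← sub_sub_sub_cancel_left _ _ y]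
    exact norm_sub_le _ _
  have hK : 0 ≤ (C - 1) * (μ * ‖M‖ ^ 2 - 1) :=
    mul_nonneg (by linarith) (by rw [div_le_iff₀ hμ] at hμ3; linarith)
  have ha : 0 ≤ C * (1 / (μ * (1 - δ)) - 1) := by
    have hμδ : μ * (1 - δ) ≤ 1 := by rw [le_div_iff₀ hμ] at hμ1; nlinarith
    have hμδ0 : 0 < μ * (1 - δ) := mul_pos hμ (by linarith)
    exact mul_nonneg (by linarith) (sub_nonneg.2 ((one_le_div hμδ0).2 hμδ))
  calc ‖y - M xt‖ ^ 2 ≤ (C - 1) * (μ * ‖M‖ ^ 2 - 1) * ‖y - M xprev‖ ^ 2 + C * ‖y - M x‖ ^ 2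
        + C * (1 / (μ * (1 - δ)) - 1) * (‖y - M xprev‖ + ‖y - M x‖) ^ 2 := by
        have := mul_le_mul_of_nonneg_left (pow_le_pow_left₀ (norm_nonneg _) hMk 2) ha
        linarith
    _ ≤ _ := mul_sq_add_mul_sq_add_mul_add_sq_le hK (by linarith) ha hη (norm_nonneg _)
        (norm_nonneg _) hrT heT
    _ = _ := by ring

/-- One-step progress lemma for AIHT/AHTP under the conditions of the convergence
theorem: either the residual stays below η²‖e‖², or it shrinks by a factor c₄ < 1. -/
theorem stmt8 {d m p ℓ : ℕ} (M : Evec d →L[ℝ] Evec m) (Om : Evec d →L[ℝ] Evec p)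
    (x xprev xg xt : Evec d) (e y : Evec m) (S : Evec d → Finset (Fin p))
    (C δ μ η b₁ b₂ c₄ : ℝ)
    (hy : y = M x + e)
    (hx : Cosparse Om ℓ x)
    (hxprev : Cosparse Om ℓ xprev)
    (hScard : ∀ z : Evec d, ℓ ≤ (S z).card)
    (hSnear : ∀ z v : Evec d, Cosparse Om ℓ v →
      ‖z - Qp Om (S z) z‖ ^ 2 ≤ C * ‖z - v‖ ^ 2)
    (hC : 1 ≤ C)
    (hrip : ORIP M Om (2 * ℓ - p) δ)
    (hδ0 : 0 ≤ δ) (hδ1 : δ < 1)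
    (hη : 0 < η)
    (hb₁ : b₁ = η / (1 + η))
    (hb₂ : b₂ = (C - 1) * ‖M‖ ^ 2 * b₁ ^ 2 / (C * (1 - δ)))
    (hcond : b₂ / b₁ ^ 2 < 1)
    (hμ : 0 < μ)
    (hμ1 : 1 + δ ≤ 1 / μ)
    (hμ2 : 1 / μ < (1 + Real.sqrt (1 - b₂ / b₁ ^ 2)) * b₁ * (1 - δ))
    (hμ3 : 1 / μ ≤ ‖M‖ ^ 2)
    (hxg : xg = xprev + μ • (ContinuousLinearMap.adjoint M) (y - M xprev))
    (hxt : xt = Qp Om (S xg) xg)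
    (hc₄ : c₄ = (1 + 1 / η) ^ 2 * (1 / (μ * (1 - δ)) - 1) * C
        + (C - 1) * (μ * ‖M‖ ^ 2 - 1) + C / η ^ 2) :
    (‖y - M xprev‖ ^ 2 ≤ η ^ 2 * ‖e‖ ^ 2 → ‖y - M xt‖ ^ 2 ≤ η ^ 2 * ‖e‖ ^ 2) ∧
    (η ^ 2 * ‖e‖ ^ 2 < ‖y - M xprev‖ ^ 2 →
      ‖y - M xt‖ ^ 2 ≤ c₄ * ‖y - M xprev‖ ^ 2) ∧
    c₄ < 1 := by
  have he : y - M x = e := by rw [hy, add_sub_cancel_left]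
  have hc₄1 : c₄ < 1 := hc₄ ▸ aiht_rate_lt_one (by linarith) hδ0 hδ1 hη hb₁ hb₂ hcond hμ hμ1 hμ2
  have hbound (T : ℝ) (hrT : ‖y - M xprev‖ ≤ T) (heT : η * ‖e‖ ≤ T) :
      ‖y - M xt‖ ^ 2 ≤ c₄ * T ^ 2 := by
    rw [hc₄]
    exact aiht_residual_sq_le_rate_mul_sq M Om x xprev xg xt y S C δ μ η hx hxprev hScard hSnear
      hC hrip hδ0 hδ1 hη hμ hμ1 hμ3 hxg hxt T hrT (by rwa [he])
  refine ⟨fun hsmall ↦ ?_, fun hlarge ↦ ?_, hc₄1⟩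
  · rw [← mul_pow] at hsmall ⊢
    have hrT := (pow_le_pow_iff_left₀ (norm_nonneg _) (by positivity) two_ne_zero).1 hsmall
    exact (hbound _ hrT le_rfl).trans (mul_le_of_le_one_left (sq_nonneg _) hc₄1.le)
  · rw [← mul_pow] at hlarge
    have heT := (pow_lt_pow_iff_left₀ (by positivity) (norm_nonneg _) two_ne_zero).1 hlarge
    exact hbound _ le_rfl heT.le
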